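/- arXiv:2212.06819 — 5 statements merged into one kernel-verified Lean document; each statement's English description precedes it below -/
import Mathlib

section
/- Let G be a finite connected graph with first Betti number b1 and let (γ_1,…,γ_{b1}) be an integral basis of the cycle group Z_1(G,ℤ). Then in the b1-th exterior power of C_1(G,ℤ), one has γ_1 ∧ … ∧ γ_{b1} = Σ_{T spanning tree of G} ε_T · e_{T^c}, where e_{T^c} is the wedge of the positively oriented edges not in T (in a fixed order) and ε_T ∈ {−1,+1} is the determinant of the change of basis from (γ_i) to the fundamental cycle basis associated with T. -/
/-! Framework: a finite graph is given by a finite vertex type `V`, a finite linearly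
ordered type `E` of (positively oriented) edges, and maps `head, tail : E → V`.
`C_1(G,ℤ)` is modeled as `E → ℤ` (coordinates in the canonical edge basis). -/

section Graph

variable {V E : Type*} [Fintype V] [Fintype E] [DecidableEq V] [DecidableEq E]
  [LinearOrder E]

/-- The boundary operator `∂ : C₁(G,ℤ) → C₀(G,ℤ)`, `∂e = head e − tail e`. -/
def bd (head tail : E → V) : (E → ℤ) →ₗ[ℤ] (V → ℤ) where
  toFun c := fun v => ∑ e, c e *
    ((if head e = v then 1 else 0) - (if tail e = v then 1 else 0))
  map_add' c d := by
    funext v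
    simp [add_mul, Finset.sum_add_distrib]
  map_smul' r c := by
    funext v
    simp [Finset.mul_sum, mul_assoc]

/-- Two vertices are connected through the edges of `T`. -/
def Conn (head tail : E → V) (T : Finset E) (v w : V) : Prop :=
  Relation.ReflTransGen
    (fun a b => ∃ e ∈ T, (head e = a ∧ tail e = b) ∨ (head e = b ∧ tail e = a)) v w

/-- `T` is a spanning tree: it has `|V| − 1` edges and connects all vertices. -/
def IsSpanningTree (head tail : E → V) (T : Finset E) : Prop :=
  T.card + 1 = Fintype.card V ∧ ∀ v w : V, Conn head tail T v w

/-- The wedge `e_S` of the canonical basis vectors of the edges of `S`, taken in the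
fixed linear order on `E`, in the exterior algebra of `C₁(G,ℤ)`. -/
noncomputable def eWedge (S : Finset E) : ExteriorAlgebra ℤ (E → ℤ) :=
  ((S.sort (· ≤ ·)).map (fun e => ExteriorAlgebra.ι ℤ (Pi.single e (1 : ℤ)))).prod

/-- The wedge `γ₁ ∧ … ∧ γₙ` of a family of chains. -/
noncomputable def chainWedge {n : ℕ} (γ : Fin n → (E → ℤ)) :
    ExteriorAlgebra ℤ (E → ℤ) :=
  ((List.finRange n).map (fun i => ExteriorAlgebra.ι ℤ (γ i))).prod

/-- The change-of-basis determinant `det(𝒵/𝒵_T)` between a cycle basis `γ` and the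
fundamental cycle basis of a spanning tree `T`: since the fundamental cycle `γ(T,f)`
is the unique basis cycle with a (unit) coordinate on `f ∉ T`, this is the determinant
of the matrix of coordinates of the `γᵢ` on the edges outside `T` (in the fixed
order). -/
noncomputable def cbDet {n : ℕ} (γ : Fin n → (E → ℤ)) (T : Finset E) : ℤ :=
  if h : ((Tᶜ : Finset E).sort (· ≤ ·)).length = n then
    Matrix.det (Matrix.of fun i j : Fin n =>
      γ j (((Tᶜ : Finset E).sort (· ≤ ·)).get (Fin.cast h.symm i)))
  else 0

end Graph

/-! Expanding `γ₁ ∧ ⋯ ∧ γ_{b₁}` in the basis `e_S` of the `b₁`-st exterior power, the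
coefficient of `e_S` is the minor `det (γⱼ(sᵢ))` on the edges `s₁ < ⋯ < s_{b₁}` of `S`, which
is `cbDet γ Sᶜ`. If `T = Sᶜ` is a spanning tree, its fundamental cycles lie in the span of the
`γⱼ` and restrict to the unit vectors on `S`, so the minor is invertible over `ℤ`. Otherwise `T`
has `|V| - 1` edges without being connected, so it carries a nonzero cycle: boundaries of chains
on `T` sum to zero both over `V` and over the component of a vertex, and these two constraints
leave room for at most `|V| - 2` independent boundaries. That cycle is a nontrivial combination
of the `γⱼ` vanishing on `S`, so the minor is `0`. -/

open Set.powersetCard in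
theorem ExteriorAlgebra.ιMulti_eq_sum_det_smul_ιMulti_family {R M I : Type*} [CommRing R]
    [AddCommGroup M] [Module R M] [LinearOrder I] [Fintype I] (b : Module.Basis I R M) (n : ℕ)
    (v : Fin n → M) :
    ιMulti R n v = ∑ s : Set.powersetCard I n,
      (Matrix.of fun i j => b.coord (ofFinEmbEquiv.symm s j) (v i)).det •
        ιMulti_family R n b s := by
  have := congrArg (fun x : ⋀[R]^n M => (x : ExteriorAlgebra R M))
    ((b.exteriorPower n).sum_repr (exteriorPower.ιMulti R n v))
  simpa [exteriorPower.basis_repr_apply] using this.symm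

section Wedge

variable {E : Type*} [Fintype E] [DecidableEq E] [LinearOrder E] {n : ℕ}

omit [Fintype E] [DecidableEq E] [LinearOrder E] in
theorem chainWedge_eq_ιMulti (γ : Fin n → E → ℤ) :
    chainWedge γ = ExteriorAlgebra.ιMulti ℤ n γ := by
  rw [chainWedge, ExteriorAlgebra.ιMulti_apply, List.ofFn_eq_map]

theorem eWedge_eq_ιMulti_family (S : Set.powersetCard E n) :
    eWedge (S : Finset E) = ExteriorAlgebra.ιMulti_family ℤ n (Pi.basisFun ℤ E) S := by
  rw [ExteriorAlgebra.ιMulti_family, ExteriorAlgebra.ιMulti_apply, eWedge, List.ofFn_eq_map,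
    ← Finset.listMap_orderEmbOfFin_finRange _ S.prop, List.map_map]
  congr 2
  funext i
  simp [Set.powersetCard.ofFinEmbEquiv_symm_apply]

theorem cbDet_eq_det (γ : Fin n → E → ℤ) {T : Finset E} (hT : Tᶜ.card = n) :
    cbDet γ T = (Matrix.of fun i j => γ j (Tᶜ.orderEmbOfFin hT i)).det := by
  rw [cbDet, dif_pos (by simpa using hT)]
  rfl

theorem chainWedge_eq_sum_cbDet_smul_eWedge (γ : Fin n → E → ℤ) :
    chainWedge γ = ∑ S : Set.powersetCard E n, cbDet γ (S : Finset E)ᶜ • eWedge (S : Finset E) := by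
  rw [chainWedge_eq_ιMulti, ExteriorAlgebra.ιMulti_eq_sum_det_smul_ιMulti_family (Pi.basisFun ℤ E)]
  refine Finset.sum_congr rfl fun S _ => ?_
  rw [eWedge_eq_ιMulti_family, cbDet_eq_det γ (by simp), ← Matrix.det_transpose]
  simp only [compl_compl]
  rfl

end Wedge

section Minors

variable {R ι : Type*} [CommRing R] {n : ℕ} (γ : Fin n → ι → R) (s : Fin n → ι)

theorem isUnit_det_of_forall_exists_mem_span
    (h : ∀ i, ∃ z ∈ Submodule.span R (Set.range γ), z ∘ s = Pi.single i 1) :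
    IsUnit (Matrix.of fun i j => γ j (s i)).det := by
  choose z hz hzs using h
  choose c hc using fun i => (Submodule.mem_span_range_iff_exists_fun R).mp (hz i)
  refine Matrix.isUnit_det_of_right_inverse (B := (Matrix.of c).transpose) ?_
  ext k i
  have := congrFun (hzs i) k
  simp only [Function.comp_apply, ← hc i, Finset.sum_apply, Pi.smul_apply, smul_eq_mul,
    Pi.single_apply] at this
  simpa [Matrix.mul_apply, Matrix.one_apply, mul_comm] using this

theorem det_eq_zero_of_mem_span [IsDomain R] {z : ι → R}
    (hz : z ∈ Submodule.span R (Set.range γ)) (hz0 : z ≠ 0) (hzs : ∀ i, z (s i) = 0) :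
    (Matrix.of fun i j => γ j (s i)).det = 0 := by
  obtain ⟨c, rfl⟩ := (Submodule.mem_span_range_iff_exists_fun R).mp hz
  refine Matrix.exists_mulVec_eq_zero_iff.mp ⟨c, fun hc => hz0 (by simp [hc]), ?_⟩
  ext i
  simpa [Matrix.mulVec, dotProduct, mul_comm] using hzs i

end Minors

section Boundary

variable {V E : Type*} [Fintype E] [DecidableEq V] [DecidableEq E] {head tail : E → V}

theorem bd_single (e : E) :
    bd head tail (Pi.single e 1) = Pi.single (head e) 1 - Pi.single (tail e) 1 := by
  funext v
  simp [bd, Pi.single_apply, eq_comm]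

omit [DecidableEq E] in
theorem sum_bd_eq_zero {A : Finset V} {z : E → ℤ}
    (hA : ∀ e, z e ≠ 0 → (head e ∈ A ↔ tail e ∈ A)) :
    ∑ v ∈ A, bd head tail z v = 0 := by
  simp only [bd, LinearMap.coe_mk, AddHom.coe_mk]
  rw [Finset.sum_comm]
  refine Finset.sum_eq_zero fun e _ => ?_
  rw [← Finset.mul_sum, Finset.sum_sub_distrib, Finset.sum_ite_eq, Finset.sum_ite_eq]
  by_cases he : z e = 0
  · simp [he]
  · simp [hA e he]

theorem Conn.exists_bd_eq {T : Finset E} {v w : V} (h : Conn head tail T v w) :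
    ∃ p : E → ℤ, (∀ e ∉ T, p e = 0) ∧ bd head tail p = Pi.single w 1 - Pi.single v 1 := by
  induction h with
  | refl => exact ⟨0, fun _ _ => rfl, by simp⟩
  | tail _ hstep ih =>
    obtain ⟨p, hp, hbd⟩ := ih
    obtain ⟨e, he, ⟨rfl, rfl⟩ | ⟨rfl, rfl⟩⟩ := hstep
    · refine ⟨p - Pi.single e 1, fun f hf => ?_, ?_⟩
      · simp [hp f hf, ne_of_mem_of_not_mem he hf |>.symm]
      · rw [map_sub, hbd, bd_single]; abel
    · refine ⟨p + Pi.single e 1, fun f hf => ?_, ?_⟩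
      · simp [hp f hf, ne_of_mem_of_not_mem he hf |>.symm]
      · rw [map_add, hbd, bd_single]; abel

theorem exists_fundamental_cycle {T : Finset E} (hT : ∀ v w, Conn head tail T v w) (f : E) :
    ∃ z ∈ LinearMap.ker (bd head tail), ∀ e ∉ T, z e = (Pi.single f 1 : E → ℤ) e := by
  obtain ⟨p, hp, hbd⟩ := (hT (head f) (tail f)).exists_bd_eq
  refine ⟨Pi.single f 1 + p, ?_, fun e he => by simp [hp e he]⟩
  rw [LinearMap.mem_ker, map_add, hbd, bd_single]
  abel

omit [DecidableEq E] in
open Classical in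
theorem sum_bd_filter_conn_eq_zero [Fintype V] {T : Finset E} {z : E → ℤ}
    (hz : ∀ e ∉ T, z e = 0) (v : V) : ∑ u ∈ Finset.univ.filter (Conn head tail T v), bd head tail z u = 0 := by
  refine sum_bd_eq_zero fun e he => ?_
  have heT : e ∈ T := by by_contra h; exact he (hz e h)
  simp only [Finset.mem_filter, Finset.mem_univ, true_and]
  exact ⟨fun h => h.tail ⟨e, heT, .inl ⟨rfl, rfl⟩⟩, fun h => h.tail ⟨e, heT, .inr ⟨rfl, rfl⟩⟩⟩

theorem exists_cycle_of_not_conn [Fintype V] {T : Finset E} (hT : T.card + 1 = Fintype.card V)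
    {v w : V} (hvw : ¬ Conn head tail T v w) :
    ∃ z ∈ LinearMap.ker (bd head tail), (∀ e ∉ T, z e = 0) ∧ z ≠ 0 := by
  by_contra! hforest
  classical
  set A := Finset.univ.filter (Conn head tail T v)
  have hvA : v ∈ A := Finset.mem_filter.mpr ⟨Finset.mem_univ _, .refl⟩
  have hwA : w ∉ A := by simpa [A] using hvw
  -- Without a cycle on `T`, `H` would embed rank `|E| + 2` into rank `|V| + |Tᶜ| = |E| + 1`.
  let H : (E → ℤ) × ℤ × ℤ →ₗ[ℤ] (V → ℤ) × ((Tᶜ : Finset E) → ℤ) :=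
    ((bd head tail).coprod ((LinearMap.toSpanSingleton ℤ _ (Pi.single v 1)).coprod
      (LinearMap.toSpanSingleton ℤ _ (Pi.single w 1)))).prod
      (LinearMap.funLeft ℤ ℤ Subtype.val ∘ₗ LinearMap.fst ℤ _ _)
  have hH : Function.Injective H := by
    rw [injective_iff_map_eq_zero]
    rintro ⟨z, a, b⟩ h
    have hsupp : ∀ e ∉ T, z e = 0 := fun e he =>
      congrFun (congrArg Prod.snd h) ⟨e, Finset.mem_compl.mpr he⟩
    have hbd : bd head tail z + a • Pi.single v 1 + b • Pi.single w 1 = 0 := by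
      simpa [H, add_assoc] using congrArg Prod.fst h
    obtain rfl : a = 0 := by
      simpa [A, Finset.sum_add_distrib, sum_bd_filter_conn_eq_zero hsupp, Pi.single_apply, hvA,
        hwA] using congrArg (fun x => ∑ u ∈ A, x u) hbd
    obtain rfl : b = 0 := by
      simpa [Finset.sum_add_distrib, sum_bd_eq_zero (A := Finset.univ), Pi.single_apply]
        using congrArg (fun x => ∑ u, x u) hbd
    simp [hforest z (by simpa using hbd) hsupp]
  have hcard := LinearMap.finrank_le_finrank_of_injective hH
  simp only [Module.finrank_prod, Module.finrank_fintype_fun_eq_card, Module.finrank_self,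
    Fintype.card_coe, Finset.card_compl] at hcard
  have := T.card_le_univ
  omega

end Boundary

section CycleBasis

variable {V E : Type*} [Fintype V] [Fintype E] [DecidableEq V] [DecidableEq E] [LinearOrder E]
  {head tail : E → V} {b₁ : ℕ} {γ : Fin b₁ → E → ℤ}

omit [DecidableEq V] [LinearOrder E] in
theorem card_compl_eq_iff_card_add_one_eq (hb₁ : b₁ + Fintype.card V = Fintype.card E + 1)
    {T : Finset E} :
    Tᶜ.card = b₁ ↔ T.card + 1 = Fintype.card V := by
  have := T.card_le_univ
  rw [Finset.card_compl]
  omega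

theorem isUnit_cbDet_of_isSpanningTree (hb₁ : b₁ + Fintype.card V = Fintype.card E + 1)
    (hγ : Submodule.span ℤ (Set.range γ) = LinearMap.ker (bd head tail)) {T : Finset E}
    (hT : IsSpanningTree head tail T) : IsUnit (cbDet γ T) := by
  have hTc : Tᶜ.card = b₁ := (card_compl_eq_iff_card_add_one_eq hb₁).mpr hT.1
  rw [cbDet_eq_det γ hTc]
  set s := Tᶜ.orderEmbOfFin hTc
  refine isUnit_det_of_forall_exists_mem_span γ s fun i => ?_
  obtain ⟨z, hz, hzT⟩ := exists_fundamental_cycle hT.2 (s i)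
  refine ⟨z, hγ ▸ hz, funext fun j => ?_⟩
  rw [Function.comp_apply, hzT (s j) (Finset.mem_compl.mp (Tᶜ.orderEmbOfFin_mem hTc j))]
  simp only [Pi.single_apply, s.injective.eq_iff]

theorem cbDet_eq_zero_of_not_isSpanningTree (hb₁ : b₁ + Fintype.card V = Fintype.card E + 1)
    (hγ : Submodule.span ℤ (Set.range γ) = LinearMap.ker (bd head tail)) {T : Finset E}
    (hTc : Tᶜ.card = b₁) (hT : ¬ IsSpanningTree head tail T) : cbDet γ T = 0 := by
  have hTcard : T.card + 1 = Fintype.card V := (card_compl_eq_iff_card_add_one_eq hb₁).mp hTc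
  obtain ⟨v, w, hvw⟩ : ∃ v w, ¬ Conn head tail T v w := by
    simpa [IsSpanningTree, hTcard] using hT
  obtain ⟨z, hz, hzT, hz0⟩ := exists_cycle_of_not_conn hTcard hvw
  rw [cbDet_eq_det γ hTc]
  exact det_eq_zero_of_mem_span γ _ (hγ ▸ hz) hz0 fun i =>
    hzT _ (Finset.mem_compl.mp (Tᶜ.orderEmbOfFin_mem hTc i))

end CycleBasis

open Classical

theorem symanzik_cycle_tree_identity_general
    {V E : Type*} [Fintype V] [Fintype E] [DecidableEq V] [DecidableEq E]
    [LinearOrder E] (head tail : E → V)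
    (b₁ : ℕ) (hb₁ : b₁ + Fintype.card V = Fintype.card E + 1)
    (γ : Fin b₁ → (E → ℤ))
    (hγ_span : Submodule.span ℤ (Set.range γ) = LinearMap.ker (bd head tail)) :
    (∀ T : Finset E, IsSpanningTree head tail T →
        cbDet γ T = 1 ∨ cbDet γ T = -1) ∧
    chainWedge γ =
      ∑ T : Finset E,
        if IsSpanningTree head tail T then cbDet γ T • eWedge (Tᶜ) else 0 := by
  refine ⟨fun T hT => Int.isUnit_iff.mp (isUnit_cbDet_of_isSpanningTree hb₁ hγ_span hT), ?_⟩
  rw [chainWedge_eq_sum_cbDet_smul_eWedge]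
  symm
  calc ∑ T : Finset E, (if IsSpanningTree head tail T then cbDet γ T • eWedge Tᶜ else 0)
      = ∑ S : Finset E, if IsSpanningTree head tail Sᶜ then cbDet γ Sᶜ • eWedge S else 0 := by
        rw [← Equiv.sum_comp (compl_involutive.toPerm _)]
        simp
    _ = ∑ S ∈ Finset.univ.filter (· ∈ Set.powersetCard E b₁),
          if IsSpanningTree head tail Sᶜ then cbDet γ Sᶜ • eWedge S else 0 := by
        refine (Finset.sum_filter_of_ne fun S _ hS => ?_).symm
        have hST : IsSpanningTree head tail Sᶜ := by_contra fun h => hS (if_neg h)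
        simpa using (card_compl_eq_iff_card_add_one_eq hb₁).mpr hST.1
    _ = ∑ S : Set.powersetCard E b₁, cbDet γ (S : Finset E)ᶜ • eWedge (S : Finset E) := by
        rw [Finset.sum_subtype (p := (· ∈ Set.powersetCard E b₁)) _ (fun S => by simp)]
        refine Fintype.sum_congr _ _ fun S => ?_
        split_ifs with hS
        · rfl
        · rw [cbDet_eq_zero_of_not_isSpanningTree hb₁ hγ_span (by simp) hS, zero_smul]

/-- **The Symanzik cycle–tree identity.**  Let `G` be a finite connected graph with
first Betti number `b₁` and `(γ₁,…,γ_{b₁})` an integral basis of the cycle group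
`Z₁(G,ℤ) = ker ∂`.  Then each change-of-basis determinant `ε_T = det(𝒵/𝒵_T)` is `±1`
and, in the `b₁`-st exterior power of `C₁(G,ℤ)`,
`γ₁ ∧ … ∧ γ_{b₁} = Σ_{T spanning tree} ε_T • e_{T^c}`. -/
theorem symanzik_cycle_tree_identity
    {V E : Type*} [Fintype V] [Fintype E] [DecidableEq V] [DecidableEq E]
    [LinearOrder E] (head tail : E → V)
    (hconn : ∀ v w : V, Conn head tail (Finset.univ : Finset E) v w)
    (b₁ : ℕ) (hb₁ : b₁ + Fintype.card V = Fintype.card E + 1)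
    (γ : Fin b₁ → (E → ℤ))
    (hγ_indep : LinearIndependent ℤ γ)
    (hγ_span : Submodule.span ℤ (Set.range γ) = LinearMap.ker (bd head tail)) :
    (∀ T : Finset E, IsSpanningTree head tail T →
        cbDet γ T = 1 ∨ cbDet γ T = -1) ∧
    chainWedge γ =
      ∑ T : Finset E,
        if IsSpanningTree head tail T then cbDet γ T • eWedge (Tᶜ) else 0 :=
  symanzik_cycle_tree_identity_general head tail b₁ hb₁ γ hγ_span
end

section
/- Let G be a finite connected weighted graph with positive edge weights x = (x_e). Endow C^1(G,ℝ) with the inner product in which the dual edge basis is orthogonal with ||e*||² = x_e. If (κ_1,…,κ_{|V|−1}) is any integral basis of the cut group B^1(G,ℤ), then ||κ_1 ∧ … ∧ κ_{|V|−1}||² = Σ_{T spanning tree of G} Π_{e ∈ T} x_e, the Kirchhoff polynomial of G. -/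
/-! Framework: finite graph `(V, E, head, tail)` with `C¹(G,ℤ)` modeled as `E → ℤ`. -/

section Graph

variable {V E : Type*} [Fintype V] [Fintype E] [DecidableEq V] [DecidableEq E]

/-- The coboundary operator `δ : C⁰(G,ℤ) → C¹(G,ℤ)`; its image is the cut group. -/
def cobd (head tail : E → V) : (V → ℤ) →ₗ[ℤ] (E → ℤ) where
  toFun f := fun e => f (head e) - f (tail e)
  map_add' f g := by funext e; simp; ring
  map_smul' r f := by funext e; simp [mul_sub]

end Graph

open Classical

/-! Cauchy–Binet, in the form `n! · det (A B) = ∑_{p : Fin n → E} det (A_p) det (B_p)` (which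
needs no enumeration of `n`-subsets), writes the Gram determinant as a sum over `n`-edge sets `S`
of `∏_{e ∈ S} x_e · det (κ|_S)²`, where `κ|_S` is the square matrix of the basis restricted to `S`.
If `S` is a spanning tree, restriction to `S` maps the cut lattice onto `ℤ^S`: the cut of the
component of `head e` in `S ∖ {e}` restricts to the indicator of `e`; hence `det (κ|_S) = ±1`.
Otherwise `S` is disconnected, the cut of one of its components is a nonzero element of the cut
lattice vanishing on `S`, and `det (κ|_S) = 0`. -/

open Finset Matrix

namespace Matrix

variable {m ι R : Type*} [Fintype m] [CommRing R]

theorem vecMul_of_apply_comp (κ : m → ι → R) (p : m → ι) (c : m → R) :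
    c ᵥ* of (fun a b => κ a (p b)) = (∑ a, c a • κ a) ∘ p := by
  ext b
  simp [vecMul, dotProduct, Finset.sum_apply]

variable [DecidableEq m] [Fintype ι]

theorem det_mul_eq_sum_prod_mul_det_submatrix (A : Matrix m ι R) (B : Matrix ι m R) :
    (A * B).det = ∑ p : m → ι, (∏ i, B (p i) i) * (A.submatrix id p).det := by
  simp only [det_apply', mul_apply, Finset.prod_univ_sum, Fintype.piFinset_univ, Finset.mul_sum,
    prod_mul_distrib]
  rw [Finset.sum_comm]
  refine Fintype.sum_congr _ _ fun p => Fintype.sum_congr _ _ fun σ => ?_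
  simp only [submatrix_apply, id]
  ring

theorem factorial_card_mul_det_mul (A : Matrix m ι R) (B : Matrix ι m R) :
    ((Fintype.card m).factorial : R) * (A * B).det =
      ∑ p : m → ι, (A.submatrix id p).det * (B.submatrix p id).det := by
  symm
  calc ∑ p : m → ι, (A.submatrix id p).det * (B.submatrix p id).det
      = ∑ p : m → ι, ∑ σ : Equiv.Perm m,
          (∏ i, B ((p ∘ σ) i) i) * (A.submatrix id (p ∘ σ)).det := by
        refine Fintype.sum_congr _ _ fun p => ?_
        rw [det_apply' (B.submatrix p id), Finset.mul_sum]
        refine Fintype.sum_congr _ _ fun σ => ?_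
        rw [show A.submatrix id (p ∘ σ) = (A.submatrix id p).submatrix id σ from rfl, det_permute']
        simp only [submatrix_apply, id, Function.comp_apply]
        ring
    _ = ∑ σ : Equiv.Perm m, (A * B).det := by
        rw [Finset.sum_comm]
        refine Fintype.sum_congr _ _ fun σ => ?_
        rw [det_mul_eq_sum_prod_mul_det_submatrix]
        exact Fintype.sum_equiv (Equiv.arrowCongr σ.symm (Equiv.refl ι)) _ _ fun _ => rfl
    _ = ((Fintype.card m).factorial : R) * (A * B).det := by
        rw [Finset.sum_const, Finset.card_univ, Fintype.card_perm, nsmul_eq_mul]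

theorem factorial_card_mul_det_weighted_gram (A : Matrix m ι R) (w : ι → R) :
    ((Fintype.card m).factorial : R) * (of fun i j => ∑ k, w k * A i k * A j k).det =
      ∑ p : m → ι, (∏ i, w (p i)) * (A.submatrix id p).det ^ 2 := by
  have hgram : (of fun i j => ∑ k, w k * A i k * A j k) = A * of fun k j => w k * A j k := by
    ext i j
    simp only [of_apply, mul_apply]
    exact Fintype.sum_congr _ _ fun k => by ring
  rw [hgram, factorial_card_mul_det_mul]
  refine Fintype.sum_congr _ _ fun p => ?_
  have hB : ((of fun k j => w k * A j k).submatrix p id).det =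
      (∏ i, w (p i)) * (A.submatrix id p).det := by
    rw [← det_transpose (A.submatrix id p), ← det_mul_column]
    rfl
  rw [hB]
  ring

end Matrix

namespace Fintype

variable {m ι M : Type*} [Fintype m] [DecidableEq m] [Fintype ι] [DecidableEq ι]

theorem card_filter_image_univ_eq_factorial {T : Finset ι} (hT : #T = card m) :
    #{p : m → ι | univ.image p = T} = (card m).factorial := by
  have hcard : card m = card T := by rw [card_coe, hT]
  rw [← card_equiv (equivOfCardEq hcard), ← Finset.card_univ]
  symm
  refine Finset.card_bij (fun σ _ a => (σ a : ι)) (fun σ _ => ?_) (fun σ _ τ _ h => ?_)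
    (fun p hp => ?_)
  · simp only [mem_filter, mem_univ, true_and]
    ext e
    simp only [mem_image, mem_univ, true_and]
    exact ⟨fun ⟨a, ha⟩ => ha ▸ (σ a).2, fun he => ⟨σ.symm ⟨e, he⟩, by simp⟩⟩
  · exact Equiv.ext fun a => Subtype.ext (congrFun h a)
  · simp only [mem_filter, mem_univ, true_and] at hp
    have hmem (a : m) : p a ∈ T := hp ▸ mem_image_of_mem p (mem_univ a)
    have hsurj : Function.Surjective fun a => (⟨p a, hmem a⟩ : T) := by
      rintro ⟨e, he⟩
      obtain ⟨a, -, rfl⟩ := mem_image.mp (hp ▸ he)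
      exact ⟨a, rfl⟩
    exact ⟨Equiv.ofBijective _ ((bijective_iff_surjective_and_card _).mpr ⟨hsurj, hcard⟩),
      mem_univ _, rfl⟩

theorem sum_image_univ_eq_factorial_smul [AddCommMonoid M] (F : Finset ι → M)
    (hF : ∀ T, F T ≠ 0 → #T = card m) :
    ∑ p : m → ι, F (univ.image p) = (card m).factorial • ∑ T, F T := by
  rw [Finset.sum_comp, Finset.smul_sum]
  refine Finset.sum_subset (subset_univ _) (fun T _ hT => ?_) |>.trans
    (Fintype.sum_congr _ _ fun T => ?_)
  · rw [Finset.filter_eq_empty_iff.mpr fun p _ hp => hT (mem_image.mpr ⟨p, mem_univ _, hp⟩),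
      Finset.card_empty, zero_smul]
  · by_cases hT : F T = 0
    · simp [hT]
    · rw [card_filter_image_univ_eq_factorial (hF T hT)]

end Fintype

section CutLattice

variable {V E : Type*} {head tail : E → V} {T : Finset E} {v w : V}

theorem cobd_apply (f : V → ℤ) (e : E) : cobd head tail f e = f (head e) - f (tail e) := rfl

@[simp]
theorem Conn.refl (v : V) : Conn head tail T v v :=
  Relation.ReflTransGen.refl

theorem Conn.symm (h : Conn head tail T v w) : Conn head tail T w v :=
  Relation.ReflTransGen.mono (fun _ _ ⟨e, he, h⟩ => ⟨e, he, h.symm⟩) _ _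
    (Relation.ReflTransGen.swap _ _ h)

theorem Conn.of_mem {e : E} (he : e ∈ T) : Conn head tail T (head e) (tail e) :=
  Relation.ReflTransGen.single ⟨e, he, Or.inl ⟨rfl, rfl⟩⟩

theorem Conn.eq_of_cobd_eq_zero {f : V → ℤ} (hf : ∀ e ∈ T, cobd head tail f e = 0)
    (h : Conn head tail T v w) : f v = f w := by
  induction h with
  | refl => rfl
  | tail _ hstep ih =>
    obtain ⟨e, he, ⟨rfl, rfl⟩ | ⟨rfl, rfl⟩⟩ := hstep
    · exact ih.trans (sub_eq_zero.mp (hf e he))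
    · exact ih.trans (sub_eq_zero.mp (hf e he)).symm

theorem Conn.erase [DecidableEq E] {e : E} (h : Conn head tail T v w)
    (he : Conn head tail (T.erase e) (head e) (tail e)) : Conn head tail (T.erase e) v w := by
  refine Relation.reflTransGen_closed (fun a b ⟨e', he', hab⟩ => ?_) _ _ h
  by_cases hee' : e' = e
  · subst hee'
    rcases hab with ⟨rfl, rfl⟩ | ⟨rfl, rfl⟩
    exacts [he, he.symm]
  · exact Relation.ReflTransGen.single ⟨e', mem_erase.mpr ⟨hee', he'⟩, hab⟩

variable (head tail) in
noncomputable def componentIndicator (T : Finset E) (v₀ : V) : V → ℤ :=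
  fun v => if Conn head tail T v₀ v then 1 else 0

theorem cobd_componentIndicator_eq_zero {v₀ : V} {e : E} (he : e ∈ T) :
    cobd head tail (componentIndicator head tail T v₀) e = 0 := by
  have hiff : Conn head tail T v₀ (head e) ↔ Conn head tail T v₀ (tail e) :=
    ⟨fun h => h.trans (Conn.of_mem he), fun h => h.trans (Conn.of_mem he).symm⟩
  simp only [cobd_apply, componentIndicator, hiff, sub_self]

variable {n : ℕ} {κ : Fin n → E → ℤ}

theorem exists_sum_smul_eq_cobd
    (hκ_span : Submodule.span ℤ (Set.range κ) = LinearMap.range (cobd head tail)) (f : V → ℤ) :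
    ∃ c : Fin n → ℤ, ∑ a, c a • κ a = cobd head tail f :=
  (Submodule.mem_span_range_iff_exists_fun ℤ).mp (hκ_span ▸ LinearMap.mem_range_self _ f)

theorem IsSpanningTree.injective [Fintype V] [DecidableEq E] (hn : n + 1 = Fintype.card V)
    {p : Fin n → E} (hp : IsSpanningTree head tail (univ.image p)) : Function.Injective p := by
  have hcard : #(univ.image p) = #(univ : Finset (Fin n)) := by
    rw [card_univ, Fintype.card_fin]
    have := hp.1
    omega
  simpa using card_image_iff.mp hcard

theorem le_card_of_forall_conn (hκ_indep : LinearIndependent ℤ κ)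
    (hκ_span : Submodule.span ℤ (Set.range κ) = LinearMap.range (cobd head tail))
    (hT : ∀ v w, Conn head tail T v w) : n ≤ #T := by
  let φ := LinearMap.funLeft ℤ ℤ ((↑) : T → E) ∘ₗ Fintype.linearCombination ℤ κ
  have hφ : Function.Injective φ := by
    rw [← LinearMap.ker_eq_bot, Submodule.eq_bot_iff]
    intro c hc
    obtain ⟨f, hf⟩ : Fintype.linearCombination ℤ κ c ∈ LinearMap.range (cobd head tail) :=
      hκ_span ▸ Submodule.mem_span_range_iff_exists_fun ℤ |>.mpr ⟨c, rfl⟩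
    have hfT : ∀ e ∈ T, cobd head tail f e = 0 := fun e he => by
      simpa [φ, hf] using congrFun hc ⟨e, he⟩
    have hzero : Fintype.linearCombination ℤ κ c = 0 := by
      ext e
      rw [← hf, cobd_apply, (hT _ _).eq_of_cobd_eq_zero hfT, sub_self, Pi.zero_apply]
    exact Fintype.linearIndependent_iff.mp hκ_indep c
      (by rwa [Fintype.linearCombination_apply] at hzero) |> funext
  simpa using LinearMap.finrank_le_finrank_of_injective hφ

variable [DecidableEq E]

theorem IsSpanningTree.not_conn_erase [Fintype V] (hn : n + 1 = Fintype.card V)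
    (hκ_indep : LinearIndependent ℤ κ)
    (hκ_span : Submodule.span ℤ (Set.range κ) = LinearMap.range (cobd head tail))
    (hT : IsSpanningTree head tail T) {e : E} (he : e ∈ T) :
    ¬ Conn head tail (T.erase e) (head e) (tail e) := fun h => by
  have hle := le_card_of_forall_conn hκ_indep hκ_span fun v w => (hT.2 v w).erase h
  have hpos := card_pos.mpr ⟨e, he⟩
  rw [card_erase_of_mem he] at hle
  have := hT.1
  omega

theorem isUnit_det_of_isSpanningTree [Fintype V] (hn : n + 1 = Fintype.card V)
    (hκ_indep : LinearIndependent ℤ κ)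
    (hκ_span : Submodule.span ℤ (Set.range κ) = LinearMap.range (cobd head tail))
    {p : Fin n → E} (hp : IsSpanningTree head tail (univ.image p)) :
    IsUnit (of fun a b => κ a (p b)).det := by
  rw [← isUnit_iff_isUnit_det, ← vecMul_surjective_iff_isUnit]
  have hsingle (b : Fin n) : ∃ c, c ᵥ* of (fun a b => κ a (p b)) = Pi.single b 1 := by
    set T := univ.image p
    have hcut := hp.not_conn_erase hn hκ_indep hκ_span (mem_image_of_mem p (mem_univ b))
    obtain ⟨c, hc⟩ :=
      exists_sum_smul_eq_cobd hκ_span (componentIndicator head tail (T.erase (p b)) (head (p b)))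
    refine ⟨c, ?_⟩
    rw [vecMul_of_apply_comp, hc]
    ext b'
    by_cases hb : b' = b
    · subst hb
      simp [cobd_apply, componentIndicator, hcut]
    · have hmem : p b' ∈ T.erase (p b) :=
        mem_erase.mpr ⟨(hp.injective hn).ne hb, mem_image_of_mem p (mem_univ b')⟩
      simp [cobd_componentIndicator_eq_zero hmem, hb]
  choose c hc using hsingle
  refine fun w => ⟨∑ b, w b • c b, ?_⟩
  simp only [sum_vecMul, smul_vecMul, hc]
  ext i
  simp [Pi.single_apply]

variable [Fintype E]

theorem det_eq_zero_of_not_forall_conn (hconn : ∀ v w : V, Conn head tail (univ : Finset E) v w)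
    (hκ_span : Submodule.span ℤ (Set.range κ) = LinearMap.range (cobd head tail))
    {p : Fin n → E} (hp : ¬ ∀ v w, Conn head tail (univ.image p) v w) :
    (of fun a b => κ a (p b)).det = 0 := by
  push Not at hp
  obtain ⟨v₀, w₀, hvw⟩ := hp
  obtain ⟨c, hc⟩ := exists_sum_smul_eq_cobd hκ_span (componentIndicator head tail (univ.image p) v₀)
  refine exists_vecMul_eq_zero_iff.mp ⟨c, ?_, ?_⟩
  · rintro rfl
    simp only [Pi.zero_apply, zero_smul, sum_const_zero] at hc
    have := (hconn v₀ w₀).eq_of_cobd_eq_zero fun e _ => by rw [← hc, Pi.zero_apply]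
    simp [componentIndicator, hvw] at this
  · rw [vecMul_of_apply_comp, hc]
    ext b
    exact cobd_componentIndicator_eq_zero (mem_image_of_mem p (mem_univ b))

theorem det_sq_eq_ite_isSpanningTree [Fintype V]
    (hconn : ∀ v w : V, Conn head tail (univ : Finset E) v w) (hn : n + 1 = Fintype.card V)
    (hκ_indep : LinearIndependent ℤ κ)
    (hκ_span : Submodule.span ℤ (Set.range κ) = LinearMap.range (cobd head tail))
    (p : Fin n → E) :
    (of fun a b => κ a (p b)).det ^ 2 =
      if IsSpanningTree head tail (univ.image p) then 1 else 0 := by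
  split_ifs with hp
  · exact Int.isUnit_sq (isUnit_det_of_isSpanningTree hn hκ_indep hκ_span hp)
  · have hdisconn : ¬ ∀ v w, Conn head tail (univ.image p) v w := fun hT => by
      have hcard : #(univ.image p) = n :=
        (card_image_le.trans_eq (card_fin n)).antisymm (le_card_of_forall_conn hκ_indep hκ_span hT)
      exact hp ⟨by omega, hT⟩
    rw [det_eq_zero_of_not_forall_conn hconn hκ_span hdisconn, zero_pow two_ne_zero]

end CutLattice

theorem cut_basis_gram_det_eq_kirchhoff_general
    {V E : Type*} [Fintype V] [Fintype E]
    (head tail : E → V)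
    (hconn : ∀ v w : V, Conn head tail (Finset.univ : Finset E) v w)
    (x : E → ℝ)
    (n : ℕ) (hn : n + 1 = Fintype.card V)
    (κ : Fin n → (E → ℤ))
    (hκ_indep : LinearIndependent ℤ κ)
    (hκ_span : Submodule.span ℤ (Set.range κ) = LinearMap.range (cobd head tail)) :
    Matrix.det (Matrix.of fun i j : Fin n =>
        ∑ e : E, x e * (κ i e : ℝ) * (κ j e : ℝ)) =
      ∑ T : Finset E,
        if IsSpanningTree head tail T then ∏ e ∈ T, x e else 0 := by
  set kirchhoffTerm : Finset E → ℝ :=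
    fun T => if IsSpanningTree head tail T then ∏ e ∈ T, x e else 0
  have hterm (p : Fin n → E) :
      (∏ i, x (p i)) * ((of fun i e => (κ i e : ℝ)).submatrix id p).det ^ 2 =
        kirchhoffTerm (univ.image p) := by
    rw [show (of fun i e => (κ i e : ℝ)).submatrix id p = (of fun a b => κ a (p b)).map Int.cast
      from rfl, ← Int.cast_det, ← Int.cast_pow,
      det_sq_eq_ite_isSpanningTree hconn hn hκ_indep hκ_span p]
    simp only [kirchhoffTerm]
    split_ifs with hp
    · rw [Int.cast_one, mul_one, prod_image fun i _ j _ hij => hp.injective hn hij]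
    · rw [Int.cast_zero, mul_zero]
  have hgram := factorial_card_mul_det_weighted_gram (of fun i e => (κ i e : ℝ)) x
  simp only [of_apply, hterm] at hgram
  rw [Fintype.sum_image_univ_eq_factorial_smul kirchhoffTerm fun T hT => ?_, Fintype.card_fin,
    nsmul_eq_mul] at hgram
  · exact mul_left_cancel₀ (by positivity) hgram
  · have hcard := (ite_ne_right_iff.mp hT).1.1
    rw [Fintype.card_fin]
    omega

/-- **Squared volume of the cut lattice = Kirchhoff polynomial.**
Endow `C¹(G,ℝ)` with the inner product `⟨α,β⟩ = Σ_e x_e α_e β_e` (so `‖e*‖² = x_e`).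
For any integral basis `(κ₁,…,κ_{|V|−1})` of the cut group `B¹(G,ℤ)`, the squared norm
of `κ₁ ∧ … ∧ κ_{|V|−1}` — i.e. the Gram determinant `det(⟨κᵢ,κⱼ⟩)` — equals the
Kirchhoff polynomial `Σ_{T spanning tree} Π_{e∈T} x_e`. -/
theorem cut_basis_gram_det_eq_kirchhoff
    {V E : Type*} [Fintype V] [Fintype E] [DecidableEq V] [DecidableEq E]
    (head tail : E → V)
    (hconn : ∀ v w : V, Conn head tail (Finset.univ : Finset E) v w)
    (x : E → ℝ) (hx : ∀ e, 0 < x e)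
    (n : ℕ) (hn : n + 1 = Fintype.card V)
    (κ : Fin n → (E → ℤ))
    (hκ_indep : LinearIndependent ℤ κ)
    (hκ_span : Submodule.span ℤ (Set.range κ) = LinearMap.range (cobd head tail)) :
    Matrix.det (Matrix.of fun i j : Fin n =>
        ∑ e : E, x e * (κ i e : ℝ) * (κ j e : ℝ)) =
      ∑ T : Finset E,
        if IsSpanningTree head tail T then ∏ e ∈ T, x e else 0 :=
  cut_basis_gram_det_eq_kirchhoff_general head tail hconn x n hn κ hκ_indep hκ_span
end

section
/- Let E be a finite-dimensional real or complex inner product space with orthonormal basis (e_i)_{i∈S}, let H ⊆ E be a linear subspace, and let X be the determinantal random subset of S associated with the orthogonal projection P_H (so that P(J ⊆ X) = det of the compression of P_H to span(e_j : j∈J) for every J ⊆ S). Let K ⊆ S satisfy P(X ⊆ K) > 0. Then, conditioned on {X ⊆ K}, the random set X is determinantal on K, associated with the orthogonal projection onto P_{E_K}(H), the image of H under the orthogonal projection onto E_K = span(e_i : i ∈ K). -/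
open scoped InnerProductSpace

variable {𝕜 : Type*} [RCLike 𝕜]

/-- A (probability) measure `μ` on subsets of a finite set `S` is determinantal,
associated with the subspace `H` of `E` in the (orthonormal) basis `e`, if for every
`J ⊆ S` the probability that `J` is contained in the random set equals the determinant
of the compression to `J` of the matrix of the orthogonal projection onto `H`. -/
def IsDeterminantal {E : Type*} [NormedAddCommGroup E] [InnerProductSpace 𝕜 E]
    [FiniteDimensional 𝕜 E] {S : Type*} [Fintype S] [DecidableEq S]
    (e : S → E) (H : Submodule 𝕜 E) (μ : Finset S → ℝ) : Prop :=
  ∀ J : Finset S,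
    (↑(∑ B ∈ Finset.univ.filter (fun B : Finset S => J ⊆ B), μ B) : 𝕜) =
      Matrix.det (Matrix.of fun i j : J =>
        (inner 𝕜 (e i) (H.subtype (Submodule.orthogonalProjectionOnto H (e j))) : 𝕜))

/-!
Write `Q` for the matrix of `P_H` and `A = Kᶜ`. Inclusion–exclusion over `L ⊆ A` gives
`P(J ⊆ X ⊆ K) = ∑_L (-1)^|L| det Q_{J ∪ L}`, and by multilinearity in the rows indexed by `A`
this is the principal minor on `J ∪ A` of `Q` with its `A`-rows replaced by those of `1 - Q`.
Its Schur complement factorisation is `det (1 - Q_AA) * det (Q_JJ + Q_JA (1 - Q_AA)⁻¹ Q_AJ)`;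
the first factor is `P(X ⊆ K)` (take `J = ∅`). The second matrix is the compression to `J` of the
projection onto `P_K H`: for `j ∈ K`, that projection sends `e j` to `P_H (e j + w) - w`, where
`w = ∑_{a ∈ A} y a • e a` and `y` solves `(1 - Q_AA) y = Q_Aj`.
-/

namespace Submodule

variable {E : Type*} [NormedAddCommGroup E] [InnerProductSpace 𝕜 E] [FiniteDimensional 𝕜 E]

theorem starProjection_map_starProjection_eq {U H : Submodule 𝕜 E} {v w : E} (hv : v ∈ U)
    (hw : w ∈ Uᗮ) (hU : H.starProjection (v + w) - w ∈ U) :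
    (H.map U.starProjection.toLinearMap).starProjection v = H.starProjection (v + w) - w := by
  set h := H.starProjection (v + w)
  have hPh : U.starProjection h = h - w := by
    have := U.starProjection_eq_self_iff.mpr hU
    rwa [map_sub, U.starProjection_apply_eq_zero_iff.mpr hw, sub_zero] at this
  refine eq_starProjection_of_mem_of_inner_eq_zero ?_ ?_
  · exact hPh ▸ mem_map_of_mem (coe_mem (H.orthogonalProjectionOnto (v + w)))
  · rintro _ ⟨g, hg, rfl⟩
    rw [ContinuousLinearMap.coe_coe, inner_eq_zero_symm, inner_starProjection_left_eq_right,
      U.starProjection_eq_self_iff.mpr (sub_mem hv hU), sub_sub_eq_add_sub]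
    exact inner_right_of_mem_orthogonal hg (H.sub_starProjection_mem_orthogonal (v + w))

end Submodule

namespace Matrix

variable {R S : Type*} [CommRing R] [DecidableEq S]

def oneSubRows (A : Finset S) (M : Matrix S S R) : Matrix S S R :=
  of fun i j => if i ∈ A then (1 : Matrix S S R) i j - M i j else M i j

theorem det_oneSubRows_toBlock_union (M : Matrix S S R) {J A : Finset S}
    (hJA : Disjoint J A) (hD : IsUnit (1 - M.toBlock (· ∈ A) (· ∈ A)).det) :
    ((oneSubRows A M).toBlock (· ∈ J ∪ A) (· ∈ J ∪ A)).det =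
      (1 - M.toBlock (· ∈ A) (· ∈ A)).det *
        (M.toBlock (· ∈ J) (· ∈ J) + M.toBlock (· ∈ J) (· ∈ A) *
          (1 - M.toBlock (· ∈ A) (· ∈ A))⁻¹ * M.toBlock (· ∈ A) (· ∈ J)).det := by
  have hblocks : ((oneSubRows A M).toBlock (· ∈ J ∪ A) (· ∈ J ∪ A)).submatrix
      (Equiv.Finset.union J A hJA) (Equiv.Finset.union J A hJA) =
      fromBlocks (M.toBlock (· ∈ J) (· ∈ J)) (M.toBlock (· ∈ J) (· ∈ A))
        (-M.toBlock (· ∈ A) (· ∈ J)) (1 - M.toBlock (· ∈ A) (· ∈ A)) := by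
    ext (i | i) (j | j)
    · exact if_neg (Finset.disjoint_left.mp hJA i.2)
    · exact if_neg (Finset.disjoint_left.mp hJA i.2)
    · change (if (i : S) ∈ A then (1 : Matrix S S R) i j - M i j else M i j) = -M i j
      rw [if_pos i.2, one_apply_ne, zero_sub]
      exact fun h => Finset.disjoint_left.mp hJA (h ▸ j.2) i.2
    · change (if (i : S) ∈ A then (1 : Matrix S S R) i j - M i j else M i j) =
        (1 : Matrix A A R) i j - M i j
      rw [if_pos i.2, ← submatrix_one _ Subtype.val_injective]; rfl
  have := invertibleOfIsUnitDet _ hD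
  rw [← det_submatrix_equiv_self (Equiv.Finset.union J A hJA), hblocks, det_fromBlocks₂₂,
    invOf_eq_nonsing_inv, Matrix.mul_neg, sub_neg_eq_add]

theorem det_oneSubRows_toBlock (M : Matrix S S R) (A : Finset S) :
    ((oneSubRows A M).toBlock (· ∈ A) (· ∈ A)).det = (1 - M.toBlock (· ∈ A) (· ∈ A)).det := by
  congr 1
  ext i j
  change (if (i : S) ∈ A then (1 : Matrix S S R) i j - M i j else M i j) =
    (1 : Matrix A A R) i j - M i j
  rw [if_pos i.2, ← submatrix_one _ Subtype.val_injective]; rfl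

variable [Fintype S]

theorem sum_neg_one_pow_mul_det_toBlock_union (M : Matrix S S R) {J A : Finset S}
    (hJA : Disjoint J A) :
    ∑ L ∈ A.powerset, (-1) ^ L.card * (M.toBlock (· ∈ J ∪ L) (· ∈ J ∪ L)).det =
      ((oneSubRows A M).toBlock (· ∈ J ∪ A) (· ∈ J ∪ A)).det := by
  let Y : Matrix S S R := of (J.piecewise M.row (1 : Matrix S S R).row)
  have hrows : of ((J ∪ A).piecewise (oneSubRows A M).row (1 : Matrix S S R).row) =
      A.piecewise ((-M).row + Y.row) Y.row := by
    ext i j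
    by_cases hA : i ∈ A
    · have hJ : i ∉ J := fun hJ => Finset.disjoint_left.mp hJA hJ hA
      simp [Y, oneSubRows, hA, hJ, Finset.piecewise, neg_add_eq_sub]
    · by_cases hJ : i ∈ J <;> simp [Y, oneSubRows, hA, hJ, Finset.piecewise]
  have hterm : ∀ L : Finset S, det (of (L.piecewise (-M).row Y.row)) =
      (-1) ^ L.card * (M.toBlock (· ∈ J ∪ L) (· ∈ J ∪ L)).det := by
    intro L
    have hsign : L.piecewise (-M).row Y.row =
        L.piecewise (fun i => (-1 : R) • ((J ∪ L).piecewise M.row (1 : Matrix S S R).row) i)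
          ((J ∪ L).piecewise M.row (1 : Matrix S S R).row) := by
      ext i j
      by_cases hL : i ∈ L <;> by_cases hJ : i ∈ J <;> simp [Y, hL, hJ, Finset.piecewise]
    rw [hsign]
    refine (detRowAlternating.toMultilinearMap.map_piecewise_smul _ _ L).trans ?_
    rw [Finset.prod_const, smul_eq_mul, toBlock, ← det_piecewise_one_eq_submatrix_det]
    rfl
  rw [← Finset.sum_congr rfl fun L _ => hterm L, toBlock, ← det_piecewise_one_eq_submatrix_det,
    hrows]
  exact (detRowAlternating.map_piecewise_add _ _ A).symm

end Matrix

namespace Finset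

variable {R S : Type*} [CommRing R] [DecidableEq S]

theorem sum_neg_one_pow_card_powerset (x : Finset S) :
    ∑ m ∈ x.powerset, (-1 : R) ^ m.card = if x = ∅ then 1 else 0 := by
  have := congrArg (Int.cast : ℤ → R) (sum_powerset_neg_one_pow_card (x := x))
  push_cast at this
  exact this

theorem sum_subset_subset_eq_sum_neg_one_pow [Fintype S] (μ : Finset S → R) (J K : Finset S) :
    ∑ B with J ⊆ B ∧ B ⊆ K, μ B =
      ∑ L ∈ Kᶜ.powerset, (-1) ^ L.card * ∑ B with J ∪ L ⊆ B, μ B := by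
  simp_rw [sum_filter, mul_sum]
  rw [sum_comm]
  refine sum_congr rfl fun B _ => ?_
  by_cases hJ : J ⊆ B
  · have hpow : Kᶜ.powerset.filter (· ⊆ B) = (Kᶜ ∩ B).powerset := by
      ext L
      simp only [mem_filter, mem_powerset, subset_inter_iff]
    have hBK : Kᶜ ∩ B = ∅ ↔ B ⊆ K := by
      rw [← disjoint_iff_inter_eq_empty, disjoint_compl_left_iff]
    simp only [union_subset_iff, hJ, true_and, mul_ite, mul_zero]
    rw [← sum_filter, hpow, ← sum_mul, sum_neg_one_pow_card_powerset]
    simp only [hBK, ite_mul, one_mul, zero_mul]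
  · simp [hJ, union_subset_iff]

end Finset

namespace Orthonormal

variable {E : Type*} [NormedAddCommGroup E] [InnerProductSpace 𝕜 E] {S : Type*} {e : S → E}

theorem isOrtho_span_image (hon : Orthonormal 𝕜 e) {s t : Set S} (hst : Disjoint s t) :
    Submodule.span 𝕜 (e '' s) ⟂ Submodule.span 𝕜 (e '' t) := by
  rw [Submodule.isOrtho_span]
  rintro _ ⟨a, ha, rfl⟩ _ ⟨b, hb, rfl⟩
  exact hon.inner_eq_zero fun hab => Set.disjoint_left.mp hst ha (hab ▸ hb)

theorem mem_span_image_iff (hon : Orthonormal 𝕜 e)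
    (hspan : Submodule.span 𝕜 (Set.range e) = ⊤) {s : Set S} {x : E} :
    x ∈ Submodule.span 𝕜 (e '' s) ↔ ∀ a ∉ s, ⟪e a, x⟫_𝕜 = 0 := by
  let b := Module.Basis.mk hon.linearIndependent hspan.ge
  have hrepr : ∀ a, b.repr x a = ⟪e a, x⟫_𝕜 := fun a => by
    conv_rhs => rw [← b.linearCombination_repr x, Module.Basis.coe_mk, hon.inner_right_finsupp]
  rw [← Module.Basis.coe_mk hon.linearIndependent hspan.ge, b.mem_span_image,
    Finsupp.support_subset_iff]
  simp only [hrepr, Module.Basis.coe_mk]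

end Orthonormal

section

open Matrix

variable {E : Type*} [NormedAddCommGroup E] [InnerProductSpace 𝕜 E] [FiniteDimensional 𝕜 E]
  {S : Type*} {e : S → E} (H : Submodule 𝕜 E) {K : Finset S}

noncomputable def projMatrix (e : S → E) (H : Submodule 𝕜 E) : Matrix S S 𝕜 :=
  of fun i j => ⟪e i, H.starProjection (e j)⟫_𝕜

theorem projMatrix_map_starProjection_eq_zero (hon : Orthonormal 𝕜 e) {i : S} (hi : i ∉ K)
    (j : S) :
    projMatrix e (H.map (Submodule.span 𝕜 (e '' K)).starProjection.toLinearMap) i j = 0 := by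
  set U := Submodule.span 𝕜 (e '' K)
  have hei : e i ∈ Uᗮ := hon.isOrtho_span_image (s := {i}) (t := K) (by simpa using hi)
    (Submodule.subset_span ⟨i, rfl, rfl⟩)
  obtain ⟨g, -, hg⟩ := Submodule.mem_map.mp
    ((H.map U.starProjection.toLinearMap).starProjection_apply_mem (e j))
  refine Submodule.inner_left_of_mem_orthogonal ?_ hei
  exact hg ▸ U.starProjection_apply_mem g

variable [Fintype S] [DecidableEq S]

theorem isDeterminantal_iff {μ : Finset S → ℝ} :
    IsDeterminantal e H μ ↔ ∀ J : Finset S,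
      ((∑ B with J ⊆ B, μ B : ℝ) : 𝕜) = ((projMatrix e H).toBlock (· ∈ J) (· ∈ J)).det :=
  Iff.rfl

theorem IsDeterminantal.sum_subset_subset_eq_det {H : Submodule 𝕜 E} {μ : Finset S → ℝ}
    (hdet : IsDeterminantal e H μ) {J K : Finset S} (hJK : J ⊆ K) :
    ((∑ B with J ⊆ B ∧ B ⊆ K, μ B : ℝ) : 𝕜) =
      ((oneSubRows Kᶜ (projMatrix e H)).toBlock (· ∈ J ∪ Kᶜ) (· ∈ J ∪ Kᶜ)).det := by
  rw [Finset.sum_subset_subset_eq_sum_neg_one_pow,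
    ← sum_neg_one_pow_mul_det_toBlock_union _ (disjoint_compl_right_iff.mpr hJK),
    RCLike.ofReal_sum]
  refine Finset.sum_congr rfl fun L _ => ?_
  rw [RCLike.ofReal_mul, hdet (J ∪ L)]
  push_cast
  rfl

theorem projMatrix_map_starProjection_apply (hon : Orthonormal 𝕜 e)
    (hspan : Submodule.span 𝕜 (Set.range e) = ⊤)
    (hD : IsUnit (1 - (projMatrix e H).toBlock (· ∈ Kᶜ) (· ∈ Kᶜ)).det) {i j : S} (hi : i ∈ K)
    (hj : j ∈ K) :
    projMatrix e (H.map (Submodule.span 𝕜 (e '' K)).starProjection.toLinearMap) i j =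
      projMatrix e H i j + ∑ a : ↥Kᶜ, projMatrix e H i a *
        ((1 - (projMatrix e H).toBlock (· ∈ Kᶜ) (· ∈ Kᶜ))⁻¹ *ᵥ
          fun b : ↥Kᶜ => projMatrix e H b j) a := by
  set Q := projMatrix e H
  set D := 1 - Q.toBlock (· ∈ Kᶜ) (· ∈ Kᶜ)
  set y := D⁻¹ *ᵥ fun b : ↥Kᶜ => Q b j
  set U := Submodule.span 𝕜 (e '' K)
  set w := ∑ a : ↥Kᶜ, y a • e a
  have hw : w ∈ Uᗮ := by
    refine hon.isOrtho_span_image (s := ((Kᶜ : Finset S) : Set S)) (t := K) ?_ ?_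
    · simpa using disjoint_compl_left
    · exact Submodule.sum_mem _ fun a _ => Submodule.smul_mem _ _
        (Submodule.subset_span (Set.mem_image_of_mem e (Finset.mem_coe.mpr a.2)))
  have hinner : ∀ k, ⟪e k, H.starProjection (e j + w)⟫_𝕜 = Q k j + ∑ a : ↥Kᶜ, Q k a * y a := by
    intro k
    simp only [w, map_add, map_sum, map_smul, inner_add_right, inner_sum, inner_smul_right,
      mul_comm (y _)]
    rfl
  have hy : ∀ a : ↥Kᶜ, Q a j + ∑ b : ↥Kᶜ, Q a b * y b = y a := by
    intro a
    have hDy : D *ᵥ y = fun b : ↥Kᶜ => Q b j := by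
      rw [mulVec_mulVec, mul_nonsing_inv _ hD, one_mulVec]
    have := congrFun hDy a
    simp only [D, sub_mulVec, one_mulVec, Pi.sub_apply] at this
    rw [← this]
    simp [mulVec, dotProduct]
  have hwcoord : ∀ a : ↥Kᶜ, ⟪e a, w⟫_𝕜 = y a :=
    (hon.comp _ Subtype.val_injective).inner_right_fintype y
  have hU : H.starProjection (e j + w) - w ∈ U := by
    refine (hon.mem_span_image_iff hspan).mpr fun a ha => ?_
    have ha' : a ∈ Kᶜ := by simpa using ha
    rw [inner_sub_right, hinner, hy ⟨a, ha'⟩, hwcoord ⟨a, ha'⟩, sub_self]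
  have hei : e i ∈ U := Submodule.subset_span (Set.mem_image_of_mem e hi)
  have hej : e j ∈ U := Submodule.subset_span (Set.mem_image_of_mem e hj)
  rw [projMatrix, of_apply, Submodule.starProjection_map_starProjection_eq hej hw hU,
    inner_sub_right, hinner, Submodule.inner_right_of_mem_orthogonal hei hw, sub_zero]

theorem projMatrix_map_starProjection_toBlock (hon : Orthonormal 𝕜 e)
    (hspan : Submodule.span 𝕜 (Set.range e) = ⊤)
    (hD : IsUnit (1 - (projMatrix e H).toBlock (· ∈ Kᶜ) (· ∈ Kᶜ)).det) {J : Finset S}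
    (hJK : J ⊆ K) :
    (projMatrix e (H.map (Submodule.span 𝕜 (e '' K)).starProjection.toLinearMap)).toBlock
        (· ∈ J) (· ∈ J) =
      (projMatrix e H).toBlock (· ∈ J) (· ∈ J) + (projMatrix e H).toBlock (· ∈ J) (· ∈ Kᶜ) *
        (1 - (projMatrix e H).toBlock (· ∈ Kᶜ) (· ∈ Kᶜ))⁻¹ *
          (projMatrix e H).toBlock (· ∈ Kᶜ) (· ∈ J) := by
  ext i j
  rw [toBlock_apply, projMatrix_map_starProjection_apply H hon hspan hD (hJK i.2) (hJK j.2)]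
  simp [mul_apply, mulVec, dotProduct, Finset.mul_sum, Finset.sum_mul, mul_assoc]
  rw [Finset.sum_comm]

end

theorem determinantal_conditioned_general
    {E : Type*} [NormedAddCommGroup E] [InnerProductSpace 𝕜 E] [FiniteDimensional 𝕜 E]
    {S : Type*} [Fintype S] [DecidableEq S]
    (e : S → E) (hon : Orthonormal 𝕜 e)
    (hspan : Submodule.span 𝕜 (Set.range e) = ⊤)
    (H : Submodule 𝕜 E)
    (μ : Finset S → ℝ)
    (hdet : IsDeterminantal e H μ)
    (K : Finset S)
    (hK : 0 < ∑ B ∈ Finset.univ.filter (fun B : Finset S => B ⊆ K), μ B) :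
    IsDeterminantal e
      (Submodule.map
        ((Submodule.span 𝕜 (e '' (K : Set S))).subtype ∘ₗ
          (Submodule.orthogonalProjectionOnto (Submodule.span 𝕜 (e '' (K : Set S)))).toLinearMap) H)
      (fun B => (if B ⊆ K then μ B else 0) /
        (∑ B ∈ Finset.univ.filter (fun B : Finset S => B ⊆ K), μ B)) := by
  set D := 1 - (projMatrix e H).toBlock (· ∈ Kᶜ) (· ∈ Kᶜ)
  set c := ∑ B with B ⊆ K, μ B
  have hc : (c : 𝕜) = D.det := by
    have := hdet.sum_subset_subset_eq_det (Finset.empty_subset K)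
    simp only [Finset.empty_subset, true_and] at this
    rwa [Finset.empty_union, Matrix.det_oneSubRows_toBlock] at this
  have hD : IsUnit D.det := hc ▸ (RCLike.ofReal_ne_zero.mpr hK.ne').isUnit
  refine (isDeterminantal_iff (H.map (Submodule.span 𝕜 (e '' K)).starProjection.toLinearMap)).mpr
    fun J => ?_
  rw [← Finset.sum_div, ← Finset.sum_filter, Finset.filter_filter, RCLike.ofReal_div]
  by_cases hJK : J ⊆ K
  · rw [hdet.sum_subset_subset_eq_det hJK,
      Matrix.det_oneSubRows_toBlock_union _ (disjoint_compl_right_iff.mpr hJK) hD, ← hc,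
      mul_div_cancel_left₀ _ (hc ▸ hD.ne_zero),
      projMatrix_map_starProjection_toBlock H hon hspan hD hJK]
  · obtain ⟨i, hiJ, hiK⟩ := Finset.not_subset.mp hJK
    rw [Finset.filter_false_of_mem fun B _ hB => hJK (hB.1.trans hB.2), Finset.sum_empty,
      RCLike.ofReal_zero, zero_div]
    exact (Matrix.det_eq_zero_of_row_eq_zero (⟨i, hiJ⟩ : ↥J)
      fun j => projMatrix_map_starProjection_eq_zero H hon hiK j).symm

/-- **Conditioning a determinantal measure on staying inside `K`.**
If `X` is determinantal associated with the orthogonal projection on `H` in an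
orthonormal basis `(e_i)_{i ∈ S}`, and `P(X ⊆ K) > 0`, then `X` conditioned on
`{X ⊆ K}` is determinantal, associated with the orthogonal projection onto the image
of `H` under the orthogonal projection onto `E_K = span (e_i : i ∈ K)`. -/
theorem determinantal_conditioned
    {E : Type*} [NormedAddCommGroup E] [InnerProductSpace 𝕜 E] [FiniteDimensional 𝕜 E]
    {S : Type*} [Fintype S] [DecidableEq S]
    (e : S → E) (hon : Orthonormal 𝕜 e)
    (hspan : Submodule.span 𝕜 (Set.range e) = ⊤)
    (H : Submodule 𝕜 E)
    (μ : Finset S → ℝ) (hμ0 : ∀ B, 0 ≤ μ B) (hμ1 : ∑ B : Finset S, μ B = 1)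
    (hdet : IsDeterminantal e H μ)
    (K : Finset S)
    (hK : 0 < ∑ B ∈ Finset.univ.filter (fun B : Finset S => B ⊆ K), μ B) :
    IsDeterminantal e
      (Submodule.map
        ((Submodule.span 𝕜 (e '' (K : Set S))).subtype ∘ₗ
          (Submodule.orthogonalProjectionOnto (Submodule.span 𝕜 (e '' (K : Set S)))).toLinearMap) H)
      (fun B => (if B ⊆ K then μ B else 0) /
        (∑ B ∈ Finset.univ.filter (fun B : Finset S => B ⊆ K), μ B)) :=
  determinantal_conditioned_general e hon hspan H μ hdet K hK
end

section
/- Let u : E_0 → E_1 be an injective linear map between finite-dimensional inner product spaces and let H be a linear subspace of E_0 with orthogonal complement H^⊥. Then det(u* u) = det(ι_{H^⊥}* u* u ι_{H^⊥}) · det(ι_H* u* Q u ι_H), where ι_H, ι_{H^⊥} are the inclusions, and Q is the orthogonal projection of E_1 onto the kernel of ι_{H^⊥}* u*, i.e., onto the orthogonal complement of u(H^⊥). -/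
/-!
Split `E₀ = H ⊕ Hᗮ`. In this decomposition the Gram map `u* u` has blocks `[[A, B], [C, D]]`
with `D = v* v` for `v = u ∘ ι_{Hᗮ}`, which is invertible because `u` is injective. The block
determinant formula gives `det (u* u) = det D * det (A - B D⁻¹ C)`, and the Schur complement
`A - B D⁻¹ C` is `ι_H* u* Q u ι_H` with `Q = 1 - v D⁻¹ v*`, the orthogonal projection onto
`ker v*`.
-/

open LinearMap Module

namespace LinearMap

section Blocks

variable {R V W ι κ : Type*} [CommRing R] [AddCommGroup V] [Module R V] [AddCommGroup W]
  [Module R W] [Fintype ι] [Fintype κ] [DecidableEq ι] [DecidableEq κ]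

theorem toMatrix_prod_coprod (b₁ : Basis ι R V) (b₂ : Basis κ R W) (A : V →ₗ[R] V)
    (B : W →ₗ[R] V) (C : V →ₗ[R] W) (D : W →ₗ[R] W) :
    toMatrix (b₁.prod b₂) (b₁.prod b₂) ((A.coprod B).prod (C.coprod D)) =
      Matrix.fromBlocks (toMatrix b₁ b₁ A) (toMatrix b₂ b₁ B) (toMatrix b₁ b₂ C)
        (toMatrix b₂ b₂ D) := by
  ext (i | i) (j | j) <;> simp [toMatrix_apply]

variable [Module.Free R V] [Module.Finite R V] [Module.Free R W] [Module.Finite R W]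

theorem det_prod_coprod (A : V →ₗ[R] V) (B : W →ₗ[R] V) (C : V →ₗ[R] W) (D : W ≃ₗ[R] W) :
    LinearMap.det ((A.coprod B).prod (C.coprod D)) =
      LinearMap.det (D : W →ₗ[R] W) * LinearMap.det (A - B ∘ₗ D.symm ∘ₗ C) := by
  classical
  let b₁ := Free.chooseBasis R V
  let b₂ := Free.chooseBasis R W
  let _ : Invertible (toMatrix b₂ b₂ D) := ⟨toMatrix b₂ b₂ D.symm,
    by rw [← toMatrix_comp, D.symm_comp, toMatrix_id],
    by rw [← toMatrix_comp, D.comp_symm, toMatrix_id]⟩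
  rw [← det_toMatrix (b₁.prod b₂), toMatrix_prod_coprod, Matrix.det_fromBlocks₂₂,
    det_toMatrix, ← det_toMatrix b₁, map_sub, toMatrix_comp _ b₂, toMatrix_comp _ b₂,
    ← Matrix.mul_assoc]
  rfl

end Blocks

variable {K E : Type*} [Field K] [AddCommGroup E] [Module K E] [FiniteDimensional K E]

theorem det_eq_det_mul_det_schur {p q : Submodule K E} (h : IsCompl p q) (G : E →ₗ[K] E)
    (D : q ≃ₗ[K] q) (hD : (D : q →ₗ[K] q) = q.projectionOnto p h.symm ∘ₗ G ∘ₗ q.subtype) :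
    LinearMap.det G = LinearMap.det (D : q →ₗ[K] q) *
      LinearMap.det (p.projectionOnto q h ∘ₗ G ∘ₗ p.subtype -
        (p.projectionOnto q h ∘ₗ G ∘ₗ q.subtype) ∘ₗ D.symm ∘ₗ
          (q.projectionOnto p h.symm ∘ₗ G ∘ₗ p.subtype)) := by
  let e := p.prodEquivOfIsCompl q h
  have hblocks : (e.symm : E →ₗ[K] p × q) ∘ₗ G ∘ₗ (e : p × q →ₗ[K] E) =
      ((p.projectionOnto q h ∘ₗ G ∘ₗ p.subtype).coprod
          (p.projectionOnto q h ∘ₗ G ∘ₗ q.subtype)).prod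
        ((q.projectionOnto p h.symm ∘ₗ G ∘ₗ p.subtype).coprod (D : q →ₗ[K] q)) := by
    rw [hD]
    ext x <;> simp [e]
  rw [← det_conj G e.symm, LinearEquiv.symm_symm, hblocks, det_prod_coprod]

end LinearMap

section InnerProduct

variable {𝕜 E F : Type*} [RCLike 𝕜] [NormedAddCommGroup E] [InnerProductSpace 𝕜 E]
  [FiniteDimensional 𝕜 E] [NormedAddCommGroup F] [InnerProductSpace 𝕜 F] [FiniteDimensional 𝕜 F]

theorem Submodule.adjoint_subtype (K : Submodule 𝕜 E) :
    LinearMap.adjoint K.subtype = K.projectionOnto Kᗮ K.isCompl_orthogonal := by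
  symm
  simp [LinearMap.eq_adjoint_iff, ← toLinearMap_orthogonalProjectionOnto_eq_projectionOnto]

theorem Submodule.adjoint_subtype_orthogonal (K : Submodule 𝕜 E) :
    LinearMap.adjoint Kᗮ.subtype = Kᗮ.projectionOnto K K.isCompl_orthogonal.symm := by
  ext x
  rw [adjoint_subtype, coe_projectionOnto_apply, coe_projectionOnto_apply,
    projection_eq_self_sub_projection K.isCompl_orthogonal]
  exact K.starProjection_orthogonal_val x

theorem LinearMap.subtype_comp_orthogonalProjectionOnto_ker_adjoint (v : E →ₗ[𝕜] F) (D : E ≃ₗ[𝕜] E)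
    (hD : (D : E →ₗ[𝕜] E) = adjoint v ∘ₗ v) :
    (ker (adjoint v)).subtype ∘ₗ ((ker (adjoint v)).orthogonalProjectionOnto : F →ₗ[𝕜] _) =
      id - v ∘ₗ D.symm ∘ₗ adjoint v := by
  ext y
  have hmem : y - v (D.symm (adjoint v y)) ∈ ker (adjoint v) := by
    rw [mem_ker, map_sub, ← comp_apply (adjoint v) v, ← hD, LinearEquiv.coe_coe,
      LinearEquiv.apply_symm_apply, sub_self]
  have horth : y - (y - v (D.symm (adjoint v y))) ∈ (ker (adjoint v))ᗮ := by
    rw [sub_sub_cancel, Submodule.mem_orthogonal]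
    intro w hw
    rw [← adjoint_inner_left, mem_ker.mp hw, inner_zero_left]
  simpa using Submodule.eq_starProjection_of_mem_orthogonal hmem horth

end InnerProduct

/-- **Schur complement factorization of squared volumes.**
Let `u : E₀ → E₁` be an injective linear map between finite-dimensional real inner
product spaces and `H ⊆ E₀` a subspace.  Then
`det (u* u) = det (ι_{H^⊥}* u* u ι_{H^⊥}) · det (ι_H* u* Q u ι_H)`,
where `Q` is the orthogonal projection of `E₁` onto `ker (ι_{H^⊥}* u*)`. -/
theorem schur_complement_volume
    {E₀ E₁ : Type*}
    [NormedAddCommGroup E₀] [InnerProductSpace ℝ E₀] [FiniteDimensional ℝ E₀]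
    [NormedAddCommGroup E₁] [InnerProductSpace ℝ E₁] [FiniteDimensional ℝ E₁]
    (u : E₀ →ₗ[ℝ] E₁) (hu : Function.Injective u)
    (H : Submodule ℝ E₀) :
    LinearMap.det (LinearMap.adjoint u ∘ₗ u) =
      LinearMap.det
        ((LinearMap.adjoint (Hᗮ.subtype)) ∘ₗ (LinearMap.adjoint u) ∘ₗ u ∘ₗ Hᗮ.subtype)
      *
      LinearMap.det
        ((LinearMap.adjoint (H.subtype)) ∘ₗ (LinearMap.adjoint u) ∘ₗ
          ((LinearMap.ker ((LinearMap.adjoint (Hᗮ.subtype)) ∘ₗ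
              (LinearMap.adjoint u))).subtype ∘ₗ
            (Submodule.orthogonalProjectionOnto
              (LinearMap.ker ((LinearMap.adjoint (Hᗮ.subtype)) ∘ₗ
                (LinearMap.adjoint u)))).toLinearMap) ∘ₗ
          u ∘ₗ H.subtype) := by
  let v := u ∘ₗ Hᗮ.subtype
  have hadj : adjoint v = Hᗮ.projectionOnto H H.isCompl_orthogonal.symm ∘ₗ adjoint u := by
    rw [adjoint_comp, Submodule.adjoint_subtype_orthogonal]
  let D := LinearEquiv.ofInjectiveEndo (adjoint v ∘ₗ v)
    ((adjoint_comp_self_injective_iff v).mpr (hu.comp Hᗮ.injective_subtype))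
  have hD : (D : Hᗮ →ₗ[ℝ] Hᗮ) = adjoint v ∘ₗ v := rfl
  rw [Submodule.adjoint_subtype_orthogonal, H.adjoint_subtype, ← hadj,
    subtype_comp_orthogonalProjectionOnto_ker_adjoint v D hD,
    det_eq_det_mul_det_schur H.isCompl_orthogonal _ D (by rw [hD, hadj]; rfl), hD, hadj]
  simp only [sub_comp, comp_sub, id_comp]
  rfl
end

section
/- Let E be a finite-dimensional inner product space with orthogonal basis (e_i)_{i∈S} and, for positive weights x = (x_i), the twisted inner product ⟨u,v⟩_x = Σ_i x_i ū_i v_i. Let w : 2^S → ℝ_{≥0} be not identically zero and let a be an injective linear map from an inner product space into E such that for every choice of positive weights x, det(a*_x a) = Σ_{B⊆S} x^B w(B), where a*_x is the adjoint with respect to ⟨·,·⟩_x and x^B = Π_{i∈B} x_i. Then for every x, the probability measure on 2^S assigning B probability proportional to x^B w(B) is determinantal, associated with the ⟨·,·⟩_x-orthogonal projection onto the image of a, in the basis (e_i / ||e_i||_x)_{i∈S}. -/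
/-!
Multiply the weights `x_i`, `i ∈ J`, by `t > 0`. The hypothesis on `det (Aᵀ D_x A)` turns
`Σ_B x^B w(B) t^|B ∩ J|` into `det (Aᵀ D_x A + (t - 1) A_Jᵀ D_{x_J} A_J)`, which the matrix
determinant lemma rewrites as `det (Aᵀ D_x A) · det (1 + (t - 1) D_{x_J} K_J)` with
`K = A (Aᵀ D_x A)⁻¹ Aᵀ`. Both sides are polynomials in `t` that agree for all `t > 0`; their
coefficients of `t^|J|` give `Σ_{B ⊇ J} x^B w(B) = det (Aᵀ D_x A) · det (D_{x_J} K_J)`, and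
conjugating by `D_{√x}` symmetrises the kernel.
-/

open Finset Matrix Polynomial

theorem card_inter_eq_card_right_iff {S : Type*} [DecidableEq S] {B J : Finset S} :
    #(B ∩ J) = #J ↔ J ⊆ B := by
  rw [← inter_eq_right]
  exact ⟨fun h => eq_of_subset_of_card_le inter_subset_right h.ge, fun h => by rw [h]⟩

theorem coeff_sum_C_mul_X_pow_card_inter {S R : Type*} [Fintype S] [DecidableEq S]
    [CommSemiring R] (f : Finset S → R) (J : Finset S) :
    (∑ B, C (f B) * X ^ #(B ∩ J)).coeff #J = ∑ B with J ⊆ B, f B := by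
  simp only [finsetSum_coeff, coeff_C_mul_X_pow, sum_filter, eq_comm (a := #J),
    card_inter_eq_card_right_iff]

theorem eval_det_X_smul_add_one_sub {ι R : Type*} [Fintype ι] [DecidableEq ι] [CommRing R]
    (G : Matrix ι ι R) (t : R) :
    (det ((X : R[X]) • G.map C + (1 - G).map C)).eval t = det (1 + (t - 1) • G) := by
  rw [← coe_evalRingHom, RingHom.map_det]
  congr 1
  ext i j
  simp only [RingHom.mapMatrix_apply, map_apply, Matrix.add_apply, Matrix.smul_apply,
    smul_eq_mul, coe_evalRingHom, eval_add, eval_mul, eval_X, eval_C, Matrix.sub_apply]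
  ring

theorem sum_superset_eq_mul_det_of_eval_eq {S R : Type*} [Fintype S] [DecidableEq S]
    [CommRing R] [IsDomain R] (J : Finset S) (f : Finset S → R) (c : R) (G : Matrix J J R)
    (T : Set R) (hT : T.Infinite)
    (h : ∀ t ∈ T, ∑ B, f B * t ^ #(B ∩ J) = c * det (1 + (t - 1) • G)) :
    ∑ B with J ⊆ B, f B = c * det G := by
  have hpoly : ∑ B, C (f B) * X ^ #(B ∩ J) =
      C c * det ((X : R[X]) • G.map C + (1 - G).map C) :=
    eq_of_infinite_eval_eq _ _ <| hT.mono fun t ht => by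
      simpa [eval_finsetSum, eval_det_X_smul_add_one_sub] using h t ht
  rw [← coeff_sum_C_mul_X_pow_card_inter, hpoly, coeff_C_mul, ← Fintype.card_coe J,
    coeff_det_X_add_C_card]

section TransposeMulDiagonalMul

variable {S n R : Type*} [Fintype S] [DecidableEq S] [CommRing R]

theorem transpose_mul_diagonal_mul_apply (A : Matrix S n R) (d : S → R) (p q : n) :
    (Aᵀ * diagonal d * A) p q = ∑ i, A i p * d i * A i q := by
  rw [mul_apply]
  simp only [mul_diagonal, transpose_apply]

theorem transpose_mul_diagonal_mul_scale (A : Matrix S n R) (x : S → R) (J : Finset S) (t : R) :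
    Aᵀ * diagonal (fun i => x i * if i ∈ J then t else 1) * A =
      Aᵀ * diagonal x * A + (A.submatrix ((↑) : J → S) id)ᵀ *
        diagonal (fun i : J => (t - 1) * x i) * A.submatrix ((↑) : J → S) id := by
  ext p q
  simp only [Matrix.add_apply, transpose_mul_diagonal_mul_apply, submatrix_apply, id]
  rw [sum_coe_sort J fun i => A i p * ((t - 1) * x i) * A i q, ← Fintype.sum_ite_mem J,
    ← sum_add_distrib]
  refine sum_congr rfl fun i _ => ?_
  split_ifs <;> ring

theorem det_transpose_mul_diagonal_mul_scale [Fintype n] [DecidableEq n] (A : Matrix S n R)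
    (x : S → R) (J : Finset S) (t : R) (hM : IsUnit (Aᵀ * diagonal x * A).det) :
    det (Aᵀ * diagonal (fun i => x i * if i ∈ J then t else 1) * A) =
      det (Aᵀ * diagonal x * A) * det (1 + (t - 1) • (diagonal (fun i : J => x i) *
        (A * (Aᵀ * diagonal x * A)⁻¹ * Aᵀ).submatrix (↑) (↑))) := by
  rw [transpose_mul_diagonal_mul_scale, Matrix.mul_assoc (A.submatrix _ _)ᵀ, det_add_mul _ _ hM]
  congr 2
  rw [submatrix_mul _ _ _ id _ Function.bijective_id,
    submatrix_mul _ _ _ id _ Function.bijective_id, submatrix_id_id, ← transpose_submatrix,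
    show (fun i : J => (t - 1) * x i) = (t - 1) • fun i : J => x i from rfl, diagonal_smul]
  simp only [Matrix.smul_mul, Matrix.mul_assoc]

end TransposeMulDiagonalMul

theorem det_of_sqrt_mul_sqrt_mul {ι : Type*} [Fintype ι] [DecidableEq ι] (K : Matrix ι ι ℝ)
    (x : ι → ℝ) (hx : ∀ i, 0 ≤ x i) :
    det (of fun i j => √(x i) * √(x j) * K i j) = det (diagonal x * K) := by
  have hfactor : of (fun i j => √(x i) * √(x j) * K i j) =
      diagonal (fun i => √(x i)) * K * diagonal (fun i => √(x i)) := by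
    ext i j
    simp only [of_apply, mul_diagonal, diagonal_mul]
    ring
  rw [hfactor, det_mul, det_mul, det_mul, det_diagonal, det_diagonal, mul_right_comm,
    ← prod_mul_distrib]
  simp only [Real.mul_self_sqrt (hx _)]

theorem routine_construction_lemma_general
    {S : Type*} [Fintype S] [DecidableEq S] {m : ℕ}
    (A : Matrix S (Fin m) ℝ)
    (w : Finset S → ℝ) (hw0 : ∀ B, 0 ≤ w B) (hw : ∃ B, w B ≠ 0)
    (hdet : ∀ x : S → ℝ, (∀ i, 0 < x i) →
      (A.transpose * Matrix.diagonal x * A).det =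
        ∑ B : Finset S, (∏ i ∈ B, x i) * w B)
    (x : S → ℝ) (hx : ∀ i, 0 < x i) :
    ∀ J : Finset S,
      (∑ B ∈ Finset.univ.filter (fun B : Finset S => J ⊆ B),
          (∏ i ∈ B, x i) * w B) /
        (∑ B : Finset S, (∏ i ∈ B, x i) * w B) =
      Matrix.det (Matrix.of fun i j : J =>
        Real.sqrt (x i) * Real.sqrt (x j) *
          (A * (A.transpose * Matrix.diagonal x * A)⁻¹ * A.transpose) i j) := by
  intro J
  have hZ : 0 < ∑ B : Finset S, (∏ i ∈ B, x i) * w B := by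
    obtain ⟨B₀, hB₀⟩ := hw
    refine sum_pos' (fun B _ => mul_nonneg (prod_nonneg fun i _ => (hx i).le) (hw0 B))
      ⟨B₀, mem_univ _, mul_pos (prod_pos fun i _ => hx i) ((hw0 B₀).lt_of_ne hB₀.symm)⟩
  have hM : IsUnit (Aᵀ * diagonal x * A).det := (hdet x hx ▸ hZ.ne').isUnit
  have hscaled : ∀ t ∈ Set.Ioi (0 : ℝ), ∑ B, (∏ i ∈ B, x i) * w B * t ^ #(B ∩ J) =
      det (Aᵀ * diagonal x * A) * det (1 + (t - 1) • (diagonal (fun i : J => x i) *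
        (A * (Aᵀ * diagonal x * A)⁻¹ * Aᵀ).submatrix (↑) (↑))) := by
    intro t ht
    rw [← det_transpose_mul_diagonal_mul_scale A x J t hM,
      hdet _ fun i => mul_pos (hx i) (by split_ifs <;> simp [ht.out])]
    refine sum_congr rfl fun B _ => ?_
    rw [prod_mul_distrib, prod_ite_mem, prod_const]
    ring
  rw [sum_superset_eq_mul_det_of_eval_eq J _ _ _ _ (Set.Ioi_infinite 0) hscaled, hdet x hx,
    mul_div_cancel_left₀ _ hZ.ne']
  simpa only [submatrix_apply] using
    (det_of_sqrt_mul_sqrt_mul ((A * (Aᵀ * diagonal x * A)⁻¹ * Aᵀ).submatrix (↑) (↑))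
      (fun i : J => x i) fun i => (hx i).le).symm

/-- **The routine construction lemma for determinantal measures.**
Let `E = ℝ^S` with orthogonal basis `(e_i)` and, for positive weights `x`, the twisted
inner product `⟨u,v⟩_x = Σ_i x_i u_i v_i`.  Suppose `a` is an injective linear map into
`E` (given by a matrix `A` with linearly independent columns) such that for all positive
weights `x` one has `det(a*_x a) = det (Aᵀ D_x A) = Σ_B x^B w(B)`, where `w` is a
nonnegative, not identically zero function on subsets of `S`.  Then for each positive
`x`, the probability measure assigning `B` a probability proportional to `x^B w(B)` is
determinantal, associated with the `⟨·,·⟩_x`-orthogonal projection onto `im a`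
(whose kernel, in the orthonormal basis `(e_i/‖e_i‖_x)`, is the matrix
`√(x_i) √(x_j) · (A (Aᵀ D_x A)⁻¹ Aᵀ)_{ij}`). -/
theorem routine_construction_lemma
    {S : Type*} [Fintype S] [DecidableEq S] {m : ℕ}
    (A : Matrix S (Fin m) ℝ)
    (hA : LinearIndependent ℝ (fun j : Fin m => fun i : S => A i j))
    (w : Finset S → ℝ) (hw0 : ∀ B, 0 ≤ w B) (hw : ∃ B, w B ≠ 0)
    (hdet : ∀ x : S → ℝ, (∀ i, 0 < x i) →
      (A.transpose * Matrix.diagonal x * A).det =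
        ∑ B : Finset S, (∏ i ∈ B, x i) * w B)
    (x : S → ℝ) (hx : ∀ i, 0 < x i) :
    ∀ J : Finset S,
      (∑ B ∈ Finset.univ.filter (fun B : Finset S => J ⊆ B),
          (∏ i ∈ B, x i) * w B) /
        (∑ B : Finset S, (∏ i ∈ B, x i) * w B) =
      Matrix.det (Matrix.of fun i j : J =>
        Real.sqrt (x i) * Real.sqrt (x j) *
          (A * (A.transpose * Matrix.diagonal x * A)⁻¹ * A.transpose) i j) :=
  routine_construction_lemma_general A w hw0 hw hdet x hx
end
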